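/- arXiv:1905.07934 — 5 statements merged into one kernel-verified Lean document; each statement's English description precedes it below -/
import Mathlib

section
/- Let 1 ≤ a < b ≤ ∞. Then ∫_a^b (log t)/(t(t-1)) dt ≤ ((b-a)/(ab)) · (2 + log a), where for b = ∞ the factor (b-a)/(ab) is interpreted as the limit 1/a. -/
/-!
For `t > 1` we have `log t ≤ t - 1`, which gives
`log t / (t (t - 1)) ≤ (1 + log t) / t²`, and the right-hand side has the explicit primitive
`-(2 + log t) / t`. Integrating over `(a, b]` gives `(2 + log a) / a - (2 + log b) / b`, which is
at most `(b - a) / (a b) · (2 + log a)` because `log b ≥ log a`; over `(a, ∞)` it gives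
`(2 + log a) / a`.
-/

open MeasureTheory Real Set Filter

lemma hasDerivAt_neg_two_add_log_div {t : ℝ} (ht : 0 < t) :
    HasDerivAt (fun t => -(2 + log t) / t) ((1 + log t) / t ^ 2) t := by
  refine (((hasDerivAt_log ht.ne').const_add 2).neg.div (hasDerivAt_id t) ht.ne').congr_deriv ?_
  simp only [id, Pi.neg_apply]
  field_simp
  ring

lemma tendsto_neg_two_add_log_div_atTop :
    Tendsto (fun t : ℝ => -(2 + log t) / t) atTop (nhds 0) := by
  have hlog : Tendsto (fun t : ℝ => log t / t) atTop (nhds 0) := by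
    simpa using tendsto_pow_log_div_mul_add_atTop 1 0 1 one_ne_zero
  have hinv : Tendsto (fun t : ℝ => 2 * t⁻¹) atTop (nhds 0) := by
    simpa using tendsto_inv_atTop_zero.const_mul (2 : ℝ)
  convert (hinv.add hlog).neg using 1
  · ext t; ring
  · simp

lemma log_div_mul_sub_one_nonneg {t : ℝ} (ht : 1 ≤ t) : 0 ≤ log t / (t * (t - 1)) :=
  div_nonneg (log_nonneg ht) (mul_nonneg (by linarith) (by linarith))

lemma log_div_mul_sub_one_le {t : ℝ} (ht : 1 < t) :
    log t / (t * (t - 1)) ≤ (1 + log t) / t ^ 2 := by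
  have hlog : log t ≤ t - 1 := log_le_sub_one_of_pos (by linarith)
  rw [div_le_div_iff₀ (by nlinarith) (by positivity)]
  nlinarith [log_nonneg ht.le]

lemma setIntegral_log_div_mul_sub_one_le {s : Set ℝ} (hs : MeasurableSet s) (hs1 : s ⊆ Ioi 1)
    (hg : IntegrableOn (fun t => (1 + log t) / t ^ 2) s) :
    ∫ t in s, log t / (t * (t - 1)) ≤ ∫ t in s, (1 + log t) / t ^ 2 := by
  have hf : IntegrableOn (fun t => log t / (t * (t - 1))) s := by
    have hmeas : Measurable fun t : ℝ => log t / (t * (t - 1)) :=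
      measurable_log.div (measurable_id.mul (measurable_id.sub_const 1))
    refine hg.mono' hmeas.aestronglyMeasurable
      ((ae_restrict_iff' hs).2 (ae_of_all _ fun t ht => ?_))
    have ht1 : 1 < t := hs1 ht
    rw [norm_of_nonneg (log_div_mul_sub_one_nonneg ht1.le)]
    exact log_div_mul_sub_one_le ht1
  exact setIntegral_mono_on hf hg hs fun t ht => log_div_mul_sub_one_le (hs1 ht)

lemma integrableOn_Ioc_one_add_log_div_sq {a b : ℝ} (ha : 0 < a) :
    IntegrableOn (fun t => (1 + log t) / t ^ 2) (Ioc a b) := by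
  refine (ContinuousOn.integrableOn_Icc ?_).mono_set Ioc_subset_Icc_self
  intro t ht
  have ht0 : 0 < t := ha.trans_le ht.1
  exact ((continuousAt_log ht0.ne').const_add 1).div (continuousAt_id.pow 2)
    (pow_ne_zero 2 ht0.ne') |>.continuousWithinAt

lemma integral_Ioc_one_add_log_div_sq {a b : ℝ} (ha : 0 < a) (hab : a ≤ b) :
    ∫ t in Ioc a b, (1 + log t) / t ^ 2 = (2 + log a) / a - (2 + log b) / b := by
  rw [← intervalIntegral.integral_of_le hab, intervalIntegral.integral_eq_sub_of_hasDerivAt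
    (fun t ht => hasDerivAt_neg_two_add_log_div (ha.trans_le (uIcc_of_le hab ▸ ht).1))
    ((intervalIntegrable_iff_integrableOn_Ioc_of_le hab).2
      (integrableOn_Ioc_one_add_log_div_sq ha))]
  ring

lemma integrableOn_Ioi_one_add_log_div_sq_and_integral_eq {a : ℝ} (ha : exp (-1) ≤ a) :
    IntegrableOn (fun t => (1 + log t) / t ^ 2) (Ioi a) ∧
      ∫ t in Ioi a, (1 + log t) / t ^ 2 = (2 + log a) / a := by
  have ha0 : 0 < a := (exp_pos _).trans_le ha
  have hcont : ContinuousWithinAt (fun t => -(2 + log t) / t) (Ici a) a :=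
    (hasDerivAt_neg_two_add_log_div ha0).continuousAt.continuousWithinAt
  have hderiv : ∀ t ∈ Ioi a, HasDerivAt (fun t => -(2 + log t) / t) ((1 + log t) / t ^ 2) t :=
    fun t ht => hasDerivAt_neg_two_add_log_div (ha0.trans ht)
  have hnonneg : ∀ t ∈ Ioi a, 0 ≤ (1 + log t) / t ^ 2 := fun t ht => by
    have : -1 ≤ log t := (le_log_iff_exp_le (ha0.trans ht)).2 (ha.trans ht.le)
    have : 0 ≤ 1 + log t := by linarith
    positivity
  refine ⟨integrableOn_Ioi_deriv_of_nonneg hcont hderiv hnonneg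
    tendsto_neg_two_add_log_div_atTop, ?_⟩
  rw [integral_Ioi_of_hasDerivAt_of_nonneg hcont hderiv hnonneg
    tendsto_neg_two_add_log_div_atTop]
  ring

/-- Lemma: ∫_a^b (log t)/(t(t-1)) dt ≤ ((b-a)/(ab))·(2 + log a) for 1 ≤ a < b ≤ ∞,
where the case b = ∞ is the second conjunct with limit factor 1/a. -/
theorem stmt0 (a : ℝ) (ha : 1 ≤ a) :
    (∀ b : ℝ, a < b →
      ∫ t in Ioc a b, Real.log t / (t * (t - 1)) ≤ (b - a) / (a * b) * (2 + Real.log a)) ∧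
    (∫ t in Ioi a, Real.log t / (t * (t - 1)) ≤ (1 / a) * (2 + Real.log a)) := by
  have ha0 : 0 < a := by linarith
  have hsub {s : Set ℝ} (hs : s ⊆ Ioi a) : s ⊆ Ioi 1 := fun t ht => ha.trans_lt (hs ht)
  constructor
  · intro b hab
    have hb0 : 0 < b := ha0.trans hab
    have hlog : log a ≤ log b := log_le_log ha0 hab.le
    calc ∫ t in Ioc a b, log t / (t * (t - 1))
        ≤ ∫ t in Ioc a b, (1 + log t) / t ^ 2 :=
          setIntegral_log_div_mul_sub_one_le measurableSet_Ioc (hsub fun _ ht => ht.1)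
            (integrableOn_Ioc_one_add_log_div_sq ha0)
      _ = (2 + log a) / a - (2 + log b) / b := integral_Ioc_one_add_log_div_sq ha0 hab.le
      _ = (b - a) / (a * b) * (2 + log a) - (log b - log a) / b := by field_simp; ring
      _ ≤ (b - a) / (a * b) * (2 + log a) := sub_le_self _ (div_nonneg (sub_nonneg.2 hlog) hb0.le)
  · obtain ⟨hint, hval⟩ := integrableOn_Ioi_one_add_log_div_sq_and_integral_eq
      ((exp_le_one_iff.2 (by norm_num)).trans ha)
    calc ∫ t in Ioi a, log t / (t * (t - 1))
        ≤ ∫ t in Ioi a, (1 + log t) / t ^ 2 :=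
          setIntegral_log_div_mul_sub_one_le measurableSet_Ioi (hsub subset_rfl) hint
      _ = 1 / a * (2 + log a) := by rw [hval]; ring
end

section
/- Let g : [0,∞) → [0,∞) be non-decreasing and unbounded. Then there exists a non-decreasing function h : [0,∞) → [0,∞) with h ≤ g eventually (i.e., h(x) ≤ g(x) for all sufficiently large x) such that the condition 'there exists C with h(x²) ≤ C·h(x) for all x' fails; in fact limsup_{x→∞} h(x²)/h(x) = ∞. -/
/-!
Pick thresholds `a 0 < a 1 < ⋯` with `a n ≥ n + 1`, `a (n + 1) ≥ (a n)²` and `g (a n) > n!`, and let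
`h x = k!` where `k` is the largest index with `a k ≤ x`. Then `h ≤ g` beyond `a 0`, while at
`x = √(a (n + 1)) ∈ [a n, a (n + 1))` we get `h x ≤ n!` but `h (x²) ≥ (n + 1)!`, a jump by the
unbounded factor `n + 1`.
-/

open Nat

noncomputable section

def squaringSeq (t : ℕ → ℝ) : ℕ → ℝ
  | 0 => max (t 0) 1
  | n + 1 => max (max (squaringSeq t n ^ 2) (t (n + 1))) (n + 2)

namespace squaringSeq

variable (t : ℕ → ℝ)

theorem le_self (n : ℕ) : t n ≤ squaringSeq t n := by
  cases n with
  | zero => exact le_max_left _ _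
  | succ n => exact (le_max_right _ _).trans (le_max_left _ _)

theorem natCast_add_one_le (n : ℕ) : (n : ℝ) + 1 ≤ squaringSeq t n := by
  cases n with
  | zero => simp [squaringSeq]
  | succ n =>
    simp only [squaringSeq, Nat.cast_add, Nat.cast_one]
    linarith [le_max_right (max (squaringSeq t n ^ 2) (t (n + 1))) ((n : ℝ) + 2)]

theorem sq_le_succ (n : ℕ) : squaringSeq t n ^ 2 ≤ squaringSeq t (n + 1) :=
  (le_max_left _ _).trans (le_max_left _ _)

theorem monotone : Monotone (squaringSeq t) := by
  refine monotone_nat_of_le_succ fun n => ?_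
  have h1 : 1 ≤ squaringSeq t n := by linarith [natCast_add_one_le t n, n.cast_nonneg (α := ℝ)]
  nlinarith [sq_le_succ t n]

theorem le_sqrt_succ (n : ℕ) : squaringSeq t n ≤ √(squaringSeq t (n + 1)) :=
  Real.le_sqrt_of_sq_le (sq_le_succ t n)

theorem sqrt_succ_lt (n : ℕ) : √(squaringSeq t (n + 1)) < squaringSeq t (n + 1) := by
  have h := natCast_add_one_le t (n + 1)
  push_cast at h
  rw [Real.sqrt_lt_self_iff]
  linarith [n.cast_nonneg (α := ℝ)]

end squaringSeq

/-- The largest `k` with `a k ≤ x`, or `0` if there is none; the search bound `⌊x⌋₊` is harmless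
as soon as `k ≤ a k` for all `k`. -/
def stepIndex (a : ℕ → ℝ) (x : ℝ) : ℕ :=
  Nat.findGreatest (fun k => a k ≤ x) ⌊x⌋₊

end

namespace stepIndex

variable {a : ℕ → ℝ} {x : ℝ}

theorem monotone (a : ℕ → ℝ) : Monotone (stepIndex a) := fun _ _ hxy =>
  Nat.findGreatest_mono (fun _ hk => hk.trans hxy) (Nat.floor_mono hxy)

theorem apply_le (hx : a 0 ≤ x) : a (stepIndex a x) ≤ x :=
  Nat.findGreatest_spec (P := fun k => a k ≤ x) (Nat.zero_le _) hx

theorem le_of_apply_le (ha : ∀ k : ℕ, (k : ℝ) ≤ a k) {n : ℕ} (hx : a n ≤ x) : n ≤ stepIndex a x :=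
  Nat.le_findGreatest (Nat.le_floor ((ha n).trans hx)) hx

theorem le_of_lt_apply_succ (ha : Monotone a) {n : ℕ} (hx : x < a (n + 1)) :
    stepIndex a x ≤ n := by
  by_contra! hn
  have hk : a (stepIndex a x) ≤ x := Nat.findGreatest_of_ne_zero rfl (Nat.ne_zero_of_lt hn)
  exact (ha hn).not_gt (hk.trans_lt hx)

end stepIndex

theorem mul_factorial_lt_factorial {C : ℝ} {k n m : ℕ} (hC : C < n + 1) (hk : k ≤ n)
    (hm : n + 1 ≤ m) : C * k ! < m ! := calc
  C * k ! < (n + 1) * k ! := by gcongr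
  _ ≤ (n + 1) * n ! := by gcongr
  _ = ((n + 1)! : ℕ) := by push_cast [Nat.factorial_succ]; ring
  _ ≤ m ! := by exact_mod_cast Nat.factorial_le hm

theorem stmt6_general (g : ℝ → ℝ) (hmono : Monotone g)
    (hunb : ∀ M : ℝ, ∃ x : ℝ, M < g x) :
    ∃ h : ℝ → ℝ, (∀ x, 0 ≤ h x) ∧ Monotone h ∧
      (∃ X : ℝ, ∀ x, X ≤ x → h x ≤ g x) ∧
      (∀ C M : ℝ, ∃ x : ℝ, M ≤ x ∧ 0 < h x ∧ C * h x < h (x ^ 2)) := by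
  choose t ht using fun n : ℕ => hunb (n ! : ℝ)
  set a := squaringSeq t
  have ha_ge (k : ℕ) : (k : ℝ) ≤ a k := by linarith [squaringSeq.natCast_add_one_le t k]
  refine ⟨fun x => (stepIndex a x)!, fun x => by positivity, fun x y hxy => ?_,
    ⟨a 0, fun x hx => ?_⟩, fun C M => ?_⟩
  · exact Nat.cast_le.mpr (Nat.factorial_le (stepIndex.monotone a hxy))
  · exact (ht _).le.trans (hmono ((squaringSeq.le_self t _).trans (stepIndex.apply_le hx)))
  · obtain ⟨n, hn⟩ := exists_nat_gt (max C M)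
    have hlow := squaringSeq.le_sqrt_succ t n
    refine ⟨√(a (n + 1)), ?_, by positivity, ?_⟩
    · linarith [le_max_right C M, ha_ge n]
    rw [Real.sq_sqrt (by linarith [ha_ge (n + 1)])]
    refine mul_factorial_lt_factorial (n := n) (by linarith [le_max_left C M]) ?_
      (stepIndex.le_of_apply_le ha_ge le_rfl)
    exact stepIndex.le_of_lt_apply_succ (squaringSeq.monotone t) (squaringSeq.sqrt_succ_lt t n)

theorem stmt6 (g : ℝ → ℝ) (hg0 : ∀ x, 0 ≤ g x) (hmono : Monotone g)
    (hunb : ∀ M : ℝ, ∃ x : ℝ, M < g x) :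
    ∃ h : ℝ → ℝ, (∀ x, 0 ≤ h x) ∧ Monotone h ∧
      (∃ X : ℝ, ∀ x, X ≤ x → h x ≤ g x) ∧
      (∀ C M : ℝ, ∃ x : ℝ, M ≤ x ∧ 0 < h x ∧ C * h x < h (x ^ 2)) :=
  stmt6_general g hmono hunb
end

section
/- Let f(z) = exp(−(1+z)/(1−z)) on the unit disc 𝔻, and 0 < r < 1. Then ∫_{|z|<r} |f'(z)/f(z)| dm(z) = 2π·log(1/(1−r²)), where dm denotes planar Lebesgue measure. -/
/-!
Since `f = exp ∘ g` with `g z = -(1 + z) / (1 - z)`, the logarithmic derivative of `f` is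
`g' z = -2 / (1 - z) ^ 2`, so the integrand is `2 / ‖1 - z‖ ^ 2`. In polar coordinates, the mean
of `1 / ‖1 - z‖ ^ 2` over the circle `‖z‖ = s` is `1 / (1 - s ^ 2)`: on that circle
`(1 - s ^ 2) / ‖1 - z‖ ^ 2` is the real part of the holomorphic function `(1 + z) / (1 - z)`,
whose circle mean is its value `1` at the centre. What remains is the radial integral
`∫₀ʳ 4π s / (1 - s ^ 2) ds = 2π log (1 / (1 - r ^ 2))`.
-/

open MeasureTheory Real Set Complex Metric

theorem one_sub_ne_zero_of_norm_lt_one {R : Type*} [NormedRing R] [NormOneClass R] {z : R}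
    (hz : ‖z‖ < 1) : 1 - z ≠ 0 := by
  intro h
  rw [← sub_eq_zero.1 h] at hz
  simp at hz

theorem re_one_add_div_one_sub (z : ℂ) :
    ((1 + z) / (1 - z)).re = (1 - ‖z‖ ^ 2) / ‖1 - z‖ ^ 2 := by
  simpa [poissonKernel, herglotzRieszKernel] using
    (congrFun (poissonKernel_eq_re_herglotzRieszKernel (c := 0) (w := z)) 1).symm

theorem hasDerivAt_neg_cayley {𝕜 : Type*} [NontriviallyNormedField 𝕜] {z : 𝕜}
    (hz : 1 - z ≠ 0) :
    HasDerivAt (fun z ↦ -(1 + z) / (1 - z)) (-2 / (1 - z) ^ 2) z :=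
  (((hasDerivAt_id' z).const_add 1).neg.div ((hasDerivAt_id' z).const_sub 1) hz).congr_deriv
    (by simp only [Pi.neg_apply]; ring)

theorem logDeriv_cexp_neg_cayley {z : ℂ} (hz : 1 - z ≠ 0) :
    logDeriv (fun z ↦ cexp (-(1 + z) / (1 - z))) z = -2 / (1 - z) ^ 2 := by
  rw [logDeriv_apply, (hasDerivAt_neg_cayley hz).cexp.deriv,
    mul_div_cancel_left₀ _ (Complex.exp_ne_zero _)]

theorem norm_logDeriv_cexp_neg_cayley {z : ℂ} (hz : 1 - z ≠ 0) :
    ‖logDeriv (fun z ↦ cexp (-(1 + z) / (1 - z))) z‖ = 2 * (‖1 - z‖ ^ 2)⁻¹ := by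
  rw [logDeriv_cexp_neg_cayley hz]
  simp [div_eq_mul_inv]

theorem circleAverage_inv_norm_one_sub_sq {s : ℝ} (hs : |s| < 1) :
    circleAverage (fun z : ℂ ↦ (‖1 - z‖ ^ 2)⁻¹) 0 s = (1 - s ^ 2)⁻¹ := by
  have hne : ∀ z ∈ closedBall (0 : ℂ) |s|, 1 - z ≠ 0 := fun z hz ↦
    one_sub_ne_zero_of_norm_lt_one ((mem_closedBall_zero_iff.1 hz).trans_lt hs)
  have hdiff : DifferentiableOn ℂ (fun z : ℂ ↦ (1 + z) / (1 - z)) (closedBall 0 |s|) :=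
    DifferentiableOn.div (by fun_prop) (by fun_prop) hne
  have hmean : circleAverage (fun z : ℂ ↦ ((1 + z) / (1 - z)).re) 0 s = 1 := by
    have hint : CircleIntegrable (fun z : ℂ ↦ (1 + z) / (1 - z)) 0 s :=
      hdiff.continuousOn.mono sphere_subset_closedBall |>.circleIntegrable'
    have hcenter := DiffContOnCl.circleAverage (c := 0) (R := s)
      (hdiff.diffContOnCl_ball subset_rfl)
    exact (reCLM.circleAverage_comp_comm hint).trans (by simp [hcenter])
  have hsphere : EqOn (fun z : ℂ ↦ ((1 + z) / (1 - z)).re)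
      (fun z ↦ (1 - s ^ 2) • (‖1 - z‖ ^ 2)⁻¹) (sphere 0 |s|) := by
    intro z hz
    simp only
    rw [re_one_add_div_one_sub, mem_sphere_zero_iff_norm.1 hz, sq_abs, smul_eq_mul, div_eq_mul_inv]
  rw [circleAverage_congr_sphere hsphere, circleAverage_fun_smul, smul_eq_mul] at hmean
  exact eq_inv_of_mul_eq_one_right hmean

theorem polarCoord_symm_eq_circleMap (p : ℝ × ℝ) :
    Complex.polarCoord.symm p = circleMap 0 p.1 p.2 := by
  simp [circleMap_zero, Complex.exp_mul_I]

section PolarCoordinates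

variable {E : Type*} [NormedAddCommGroup E] [NormedSpace ℝ E]

theorem integral_Ioo_neg_pi_pi_eq_circleAverage (g : ℂ → E) (c : ℂ) (R : ℝ) :
    ∫ θ in Ioo (-π) π, g (circleMap c R θ) = (2 * π) • circleAverage g c R := by
  rw [circleAverage_eq_integral_add (-π), smul_inv_smul₀ two_pi_pos.ne',
    intervalIntegral.integral_comp_add_right (fun θ ↦ g (circleMap c R θ)),
    intervalIntegral.integral_of_le (by linarith [pi_pos]), integral_Ioc_eq_integral_Ioo]
  congr 3 <;> ring

theorem integral_ball_eq_intervalIntegral_circleAverage {g : ℂ → E} {r : ℝ} (hr : 0 ≤ r)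
    (hg : ContinuousOn g (closedBall 0 r)) :
    ∫ z in ball 0 r, g z = ∫ s in 0..r, (2 * π * s) • circleAverage g 0 s := by
  set F : ℝ × ℝ → E := fun p ↦ p.1 • g (circleMap 0 p.1 p.2)
  have hrect : ∫ z in ball 0 r, g z = ∫ p in Ioo 0 r ×ˢ Ioo (-π) π, F p := by
    rw [← integral_indicator measurableSet_ball, ← Complex.integral_comp_polarCoord_symm,
      ← integral_indicator polarCoord.open_target.measurableSet,
      ← integral_indicator (measurableSet_Ioo.prod measurableSet_Ioo)]
    congr 1
    ext ⟨s, θ⟩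
    by_cases hs : 0 < s
    · simp only [indicator, polarCoord_symm_eq_circleMap, polarCoord_target, mem_prod, mem_Ioi,
        mem_Ioo, mem_ball_zero_iff, norm_circleMap_zero, abs_of_pos hs, F]
      split_ifs <;> simp_all
    · simp [indicator, polarCoord_target, F, hs]
  have hF : IntegrableOn F (Ioo 0 r ×ˢ Ioo (-π) π) := by
    refine ContinuousOn.integrableOn_compact (isCompact_Icc.prod isCompact_Icc) ?_ |>.mono_set
      (prod_mono Ioo_subset_Icc_self Ioo_subset_Icc_self)
    refine continuousOn_fst.smul (hg.comp (by fun_prop) ?_)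
    rintro ⟨s, θ⟩ ⟨⟨hs, hsr⟩, -⟩
    simp [abs_of_nonneg hs, hsr]
  rw [hrect, Measure.volume_eq_prod, setIntegral_prod _ hF, intervalIntegral.integral_of_le hr,
    ← integral_Ioc_eq_integral_Ioo]
  congr 1
  ext s
  rw [integral_smul, integral_Ioo_neg_pi_pi_eq_circleAverage, smul_smul]
  ring_nf

end PolarCoordinates

theorem integral_two_mul_div_one_sub_sq {r : ℝ} (hr : |r| < 1) :
    ∫ s in (0 : ℝ)..r, 2 * s / (1 - s ^ 2) = -Real.log (1 - r ^ 2) := by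
  obtain ⟨hr₁, hr₂⟩ := abs_lt.1 hr
  have hpos : ∀ s ∈ uIcc 0 r, 0 < 1 - s ^ 2 := by
    intro s hs
    rcases mem_uIcc.1 hs with ⟨h₁, h₂⟩ | ⟨h₁, h₂⟩ <;> nlinarith
  have hderiv : ∀ s ∈ uIcc 0 r,
      HasDerivAt (fun s ↦ -Real.log (1 - s ^ 2)) (2 * s / (1 - s ^ 2)) s := fun s hs ↦
    (((hasDerivAt_pow 2 s).const_sub 1).log (hpos s hs).ne').neg.congr_deriv (by simp; ring)
  have hcont : ContinuousOn (fun s : ℝ ↦ 2 * s / (1 - s ^ 2)) (uIcc 0 r) :=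
    ContinuousOn.div (by fun_prop) (by fun_prop) fun s hs ↦ (hpos s hs).ne'
  rw [intervalIntegral.integral_eq_sub_of_hasDerivAt hderiv hcont.intervalIntegrable]
  simp

theorem stmt9 (r : ℝ) (hr0 : 0 < r) (hr1 : r < 1)
    (f : ℂ → ℂ) (hf : ∀ z, f z = Complex.exp (-(1 + z) / (1 - z))) :
    ∫ z in {z : ℂ | ‖z‖ < r}, ‖deriv f z / f z‖ =
      2 * π * Real.log (1 / (1 - r ^ 2)) := by
  obtain rfl : f = fun z ↦ cexp (-(1 + z) / (1 - z)) := funext hf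
  have hne : ∀ z ∈ closedBall (0 : ℂ) r, 1 - z ≠ 0 := fun z hz ↦
    one_sub_ne_zero_of_norm_lt_one ((mem_closedBall_zero_iff.1 hz).trans_lt hr1)
  have hcont : ContinuousOn (fun z : ℂ ↦ 2 * (‖1 - z‖ ^ 2)⁻¹) (closedBall 0 r) :=
    continuousOn_const.mul <| ContinuousOn.inv₀ (by fun_prop) fun z hz ↦ by simpa using hne z hz
  calc _ = ∫ z in ball (0 : ℂ) r, 2 * (‖1 - z‖ ^ 2)⁻¹ := by
        rw [← ball_zero_eq]
        exact setIntegral_congr_fun measurableSet_ball fun z hz ↦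
          norm_logDeriv_cexp_neg_cayley (hne z (ball_subset_closedBall hz))
    _ = ∫ s in 0..r, 2 * π * (2 * s / (1 - s ^ 2)) := by
        rw [integral_ball_eq_intervalIntegral_circleAverage hr0.le hcont]
        refine intervalIntegral.integral_congr fun s hs ↦ ?_
        rw [uIcc_of_le hr0.le] at hs
        have hs1 : |s| < 1 := by rw [abs_of_nonneg hs.1]; linarith [hs.2]
        have hmean : circleAverage (fun z : ℂ ↦ 2 * (‖1 - z‖ ^ 2)⁻¹) 0 s = 2 * (1 - s ^ 2)⁻¹ := by
          rw [← circleAverage_inv_norm_one_sub_sq hs1, ← smul_eq_mul, ← circleAverage_fun_smul]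
          rfl
        rw [hmean, smul_eq_mul]
        ring
    _ = _ := by
        rw [intervalIntegral.integral_const_mul,
          integral_two_mul_div_one_sub_sq (by rwa [abs_of_pos hr0]), one_div, Real.log_inv]
end

section
/- Let 0 ≤ s₁ ≤ s₂ < 1 and let p, q > 0 with q > 1. Then ∫_0^{2π} dθ / (|1 − s₁e^{iθ}|^p · |1 − s₂e^{iθ}|^q) ≍ 1/((1−s₁)^p · (1−s₂)^{q−1}), where the comparison constants depend only on p and q. -/
open Real Complex ComplexConjugate MeasureTheory

/-!
Write `A_s(θ) = ‖1 - s e^{iθ}‖`. For `0 ≤ s ≤ 1` one has `1 - s ≤ A_s(θ) ≤ 1 - s + |θ|`, and for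
`|θ| ≤ π` also `1 - s + |θ| ≤ (1 + 2π) A_s(θ)`: writing `s (e^{iθ} - 1) = (1 - s) - (1 - s e^{iθ})`,
Jordan's inequality `‖e^{iθ} - 1‖ ≥ 2|θ|/π` gives `s|θ| ≤ π A_s(θ)`, while `(1 - s)|θ| ≤ π (1 - s)`.

Lower bound: on `[0, 1 - s₂]` each `A_{s_i}` is at most `2(1 - s_i)`, and the interval has length
`1 - s₂`. Upper bound: the integrand is symmetric under `θ ↦ 2π - θ`, so it suffices to integrate
over `[0, π]`, where it is at most `(1 + 2π)^q (1 - s₁)^{-p} (1 - s₂ + θ)^{-q}`, and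
`∫₀^π (1 - s₂ + θ)^{-q} dθ ≤ (1 - s₂)^{1-q} / (q - 1)` because `q > 1`.
-/

section NormOneSubMulExp

variable {s θ : ℝ}

lemma norm_exp_ofReal_mul_I_sub_one_le (θ : ℝ) : ‖exp (θ * I) - 1‖ ≤ |θ| := by
  simpa [mul_comm] using Real.norm_exp_I_mul_ofReal_sub_one_le (x := θ)

lemma two_div_pi_mul_abs_le_norm_exp_ofReal_mul_I_sub_one (hθ : |θ| ≤ π) :
    2 / π * |θ| ≤ ‖exp (θ * I) - 1‖ := by
  have hsin := Real.mul_abs_le_abs_sin (x := θ / 2) (by rw [abs_div, abs_two]; linarith)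
  rw [abs_div, abs_two] at hsin
  rw [mul_comm (θ : ℂ), Complex.norm_exp_I_mul_ofReal_sub_one, norm_mul, Real.norm_eq_abs,
    Real.norm_eq_abs, abs_two]
  linarith

lemma one_sub_le_norm_one_sub_ofReal_mul_exp (hs : 0 ≤ s) (θ : ℝ) :
    1 - s ≤ ‖1 - s * exp (θ * I)‖ := by
  simpa [norm_mul, Complex.norm_exp_ofReal_mul_I, abs_of_nonneg hs] using
    norm_sub_norm_le (1 : ℂ) (s * exp (θ * I))

lemma norm_one_sub_ofReal_mul_exp_pos (hs₀ : 0 ≤ s) (hs₁ : s < 1) (θ : ℝ) :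
    0 < ‖1 - s * exp (θ * I)‖ :=
  (sub_pos.2 hs₁).trans_le (one_sub_le_norm_one_sub_ofReal_mul_exp hs₀ θ)

lemma norm_one_sub_ofReal_mul_exp_le (hs₀ : 0 ≤ s) (hs₁ : s ≤ 1) (θ : ℝ) :
    ‖1 - s * exp (θ * I)‖ ≤ 1 - s + |θ| := by
  calc ‖1 - s * exp (θ * I)‖ = ‖((1 - s : ℝ) : ℂ) - s * (exp (θ * I) - 1)‖ := by
        push_cast; ring_nf
    _ ≤ ‖((1 - s : ℝ) : ℂ)‖ + ‖(s : ℂ) * (exp (θ * I) - 1)‖ := norm_sub_le _ _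
    _ ≤ 1 - s + 1 * |θ| := by
        rw [norm_mul, Complex.norm_real, Complex.norm_real, Real.norm_of_nonneg (by linarith),
          Real.norm_of_nonneg hs₀]
        gcongr
        exact norm_exp_ofReal_mul_I_sub_one_le θ
    _ = 1 - s + |θ| := by ring

lemma one_sub_add_abs_le_mul_norm_one_sub_ofReal_mul_exp (hs₀ : 0 ≤ s) (hs₁ : s ≤ 1)
    (hθ : |θ| ≤ π) : 1 - s + |θ| ≤ (1 + 2 * π) * ‖1 - s * exp (θ * I)‖ := by
  set A := ‖1 - s * exp (θ * I)‖
  have hA : 1 - s ≤ A := one_sub_le_norm_one_sub_ofReal_mul_exp hs₀ θ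
  have hchord : s * ‖exp (θ * I) - 1‖ ≤ 1 - s + A := by
    calc s * ‖exp (θ * I) - 1‖ = ‖(s : ℂ) * (exp (θ * I) - 1)‖ := by
          rw [norm_mul, Complex.norm_real, Real.norm_of_nonneg hs₀]
      _ = ‖((1 - s : ℝ) : ℂ) - (1 - s * exp (θ * I))‖ := by push_cast; ring_nf
      _ ≤ ‖((1 - s : ℝ) : ℂ)‖ + A := norm_sub_le _ _
      _ = 1 - s + A := by rw [Complex.norm_real, Real.norm_of_nonneg (by linarith)]
  have hJordan := mul_le_mul_of_nonneg_left
    (two_div_pi_mul_abs_le_norm_exp_ofReal_mul_I_sub_one hθ) hs₀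
  have hsθ : s * |θ| ≤ π * A :=
    calc s * |θ| = s * (2 / π * |θ|) * (π / 2) := by field_simp
      _ ≤ (2 * A) * (π / 2) := by gcongr ?_ * _; linarith
      _ = π * A := by ring
  linarith [mul_le_mul_of_nonneg_left hθ (by linarith : 0 ≤ 1 - s),
    mul_le_mul_of_nonneg_left hA pi_pos.le]

lemma norm_one_sub_ofReal_mul_exp_two_pi_sub (s θ : ℝ) :
    ‖1 - s * exp ((2 * π - θ : ℝ) * I)‖ = ‖1 - s * exp (θ * I)‖ := by
  have hconj : exp ((2 * π - θ : ℝ) * I) = conj (exp (θ * I)) := by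
    rw [← Complex.exp_conj, map_mul, Complex.conj_ofReal, Complex.conj_I, ofReal_sub,
      sub_mul, Complex.exp_sub, ofReal_mul, ofReal_ofNat, Complex.exp_two_pi_mul_I,
      mul_neg, Complex.exp_neg, one_div]
  rw [hconj, ← Complex.norm_conj]
  simp

lemma continuous_norm_one_sub_ofReal_mul_exp (s : ℝ) :
    Continuous fun θ : ℝ ↦ ‖1 - s * exp (θ * I)‖ := by
  fun_prop

end NormOneSubMulExp

lemma integral_add_rpow_neg_le {q d b : ℝ} (hq : 1 < q) (hd : 0 < d) (hb : 0 ≤ b) :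
    ∫ θ in 0..b, (d + θ) ^ (-q) ≤ d ^ (1 - q) / (q - 1) := by
  rw [intervalIntegral.integral_comp_add_left (· ^ (-q)) d, add_zero,
    integral_rpow (Or.inr ⟨by linarith, Set.notMem_uIcc_of_lt hd (by linarith)⟩),
    show -q + 1 = 1 - q by ring, ← neg_div_neg_eq, neg_sub, neg_sub]
  gcongr
  exact sub_le_self _ (by positivity)

lemma intervalIntegral_eq_two_mul_of_symm {f : ℝ → ℝ} {a : ℝ} (hf : ∀ x, f (2 * a - x) = f x)
    (hfi : IntervalIntegrable f volume 0 (2 * a)) :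
    ∫ x in 0..2 * a, f x = 2 * ∫ x in 0..a, f x := by
  have hmid : a ∈ Set.uIcc 0 (2 * a) := by
    rw [Set.mem_uIcc]
    rcases le_total 0 a with h | h
    exacts [Or.inl ⟨h, by linarith⟩, Or.inr ⟨by linarith, h⟩]
  have hreflect : ∫ x in a..2 * a, f x = ∫ x in 0..a, f x := by
    calc ∫ x in a..2 * a, f x = ∫ x in a..2 * a, f (2 * a - x) := by simp_rw [hf]
      _ = ∫ x in 0..a, f x := by rw [intervalIntegral.integral_comp_sub_left]; ring_nf
  rw [← intervalIntegral.integral_add_adjacent_intervals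
    (hfi.mono_set (Set.uIcc_subset_uIcc Set.left_mem_uIcc hmid))
    (hfi.mono_set (Set.uIcc_subset_uIcc hmid Set.right_mem_uIcc)), hreflect, two_mul]


noncomputable def twoPointKernel (p q s₁ s₂ θ : ℝ) : ℝ :=
  1 / (‖1 - s₁ * exp (θ * I)‖ ^ p * ‖1 - s₂ * exp (θ * I)‖ ^ q)

section TwoPointKernel

variable {p q s₁ s₂ θ : ℝ}

lemma twoPointKernel_nonneg : 0 ≤ twoPointKernel p q s₁ s₂ θ := by
  unfold twoPointKernel
  positivity

lemma twoPointKernel_two_pi_sub :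
    twoPointKernel p q s₁ s₂ (2 * π - θ) = twoPointKernel p q s₁ s₂ θ := by
  simp only [twoPointKernel, norm_one_sub_ofReal_mul_exp_two_pi_sub]

lemma continuous_twoPointKernel (h₁ : 0 ≤ s₁) (h₁' : s₁ < 1) (h₂ : 0 ≤ s₂) (h₂' : s₂ < 1) :
    Continuous (twoPointKernel p q s₁ s₂) := by
  refine continuous_const.div (Continuous.mul ?_ ?_) fun θ ↦ ?_
  · exact (continuous_norm_one_sub_ofReal_mul_exp s₁).rpow_const fun θ ↦
      Or.inl (norm_one_sub_ofReal_mul_exp_pos h₁ h₁' θ).ne'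
  · exact (continuous_norm_one_sub_ofReal_mul_exp s₂).rpow_const fun θ ↦
      Or.inl (norm_one_sub_ofReal_mul_exp_pos h₂ h₂' θ).ne'
  · have := norm_one_sub_ofReal_mul_exp_pos h₁ h₁' θ
    have := norm_one_sub_ofReal_mul_exp_pos h₂ h₂' θ
    positivity

lemma one_div_two_mul_one_sub_rpow_le_twoPointKernel (hp : 0 ≤ p) (hq : 0 ≤ q) (h₁ : 0 ≤ s₁)
    (h₁₂ : s₁ ≤ s₂) (h₂ : s₂ < 1) (hθ : |θ| ≤ 1 - s₂) :
    1 / ((2 * (1 - s₁)) ^ p * (2 * (1 - s₂)) ^ q) ≤ twoPointKernel p q s₁ s₂ θ := by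
  have hA₁ := norm_one_sub_ofReal_mul_exp_pos h₁ (h₁₂.trans_lt h₂) θ
  have hA₂ := norm_one_sub_ofReal_mul_exp_pos (h₁.trans h₁₂) h₂ θ
  have hB₁ : ‖1 - s₁ * exp (θ * I)‖ ≤ 2 * (1 - s₁) := by
    linarith [norm_one_sub_ofReal_mul_exp_le h₁ (h₁₂.trans h₂.le) θ]
  have hB₂ : ‖1 - s₂ * exp (θ * I)‖ ≤ 2 * (1 - s₂) := by
    linarith [norm_one_sub_ofReal_mul_exp_le (h₁.trans h₁₂) h₂.le θ]
  exact one_div_le_one_div_of_le (by positivity) (mul_le_mul (rpow_le_rpow hA₁.le hB₁ hp)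
    (rpow_le_rpow hA₂.le hB₂ hq) (by positivity) (rpow_nonneg (by linarith) p))

lemma twoPointKernel_le (hp : 0 ≤ p) (hq : 0 ≤ q) (h₁ : 0 ≤ s₁) (h₁' : s₁ < 1) (h₂ : 0 ≤ s₂)
    (h₂' : s₂ < 1) (hθ : |θ| ≤ π) :
    twoPointKernel p q s₁ s₂ θ ≤ (1 + 2 * π) ^ q / (1 - s₁) ^ p * (1 - s₂ + |θ|) ^ (-q) := by
  have hd₁ : 0 < 1 - s₁ := by linarith
  have hd₂ : 0 < 1 - s₂ + |θ| := by positivity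
  calc twoPointKernel p q s₁ s₂ θ ≤ 1 / ((1 - s₁) ^ p * ((1 - s₂ + |θ|) / (1 + 2 * π)) ^ q) := by
        unfold twoPointKernel
        gcongr
        · exact one_sub_le_norm_one_sub_ofReal_mul_exp h₁ θ
        · rw [div_le_iff₀' (by positivity)]
          exact one_sub_add_abs_le_mul_norm_one_sub_ofReal_mul_exp h₂ h₂'.le hθ
    _ = (1 + 2 * π) ^ q / (1 - s₁) ^ p * (1 - s₂ + |θ|) ^ (-q) := by
        rw [div_rpow hd₂.le (by positivity), rpow_neg hd₂.le]
        field_simp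

end TwoPointKernel


section IntegralTwoPointKernel

variable {p q s₁ s₂ : ℝ}

lemma le_integral_twoPointKernel (hp : 0 ≤ p) (hq : 0 ≤ q) (h₁ : 0 ≤ s₁) (h₁₂ : s₁ ≤ s₂)
    (h₂ : s₂ < 1) :
    1 / (2 ^ p * 2 ^ q) * (1 / ((1 - s₁) ^ p * (1 - s₂) ^ (q - 1))) ≤
      ∫ θ in 0..2 * π, twoPointKernel p q s₁ s₂ θ := by
  have hd₁ : 0 < 1 - s₁ := by linarith
  have hd₂ : 0 < 1 - s₂ := by linarith
  have hcont := continuous_twoPointKernel (p := p) (q := q) h₁ (h₁₂.trans_lt h₂) (h₁.trans h₁₂) h₂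
  calc 1 / (2 ^ p * 2 ^ q) * (1 / ((1 - s₁) ^ p * (1 - s₂) ^ (q - 1)))
      = ∫ _ in 0..1 - s₂, 1 / ((2 * (1 - s₁)) ^ p * (2 * (1 - s₂)) ^ q) := by
        rw [intervalIntegral.integral_const, smul_eq_mul, sub_zero, mul_rpow zero_le_two hd₁.le,
          mul_rpow zero_le_two hd₂.le, rpow_sub_one hd₂.ne']
        field_simp
    _ ≤ ∫ θ in 0..1 - s₂, twoPointKernel p q s₁ s₂ θ :=
        intervalIntegral.integral_mono_on hd₂.le intervalIntegrable_const
          (hcont.intervalIntegrable _ _) fun θ hθ ↦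
          one_div_two_mul_one_sub_rpow_le_twoPointKernel hp hq h₁ h₁₂ h₂
            (by rw [abs_of_nonneg hθ.1]; exact hθ.2)
    _ ≤ ∫ θ in 0..2 * π, twoPointKernel p q s₁ s₂ θ :=
        intervalIntegral.integral_mono_interval le_rfl hd₂.le (by linarith [pi_gt_three])
          (.of_forall fun _ ↦ twoPointKernel_nonneg) (hcont.intervalIntegrable _ _)

lemma integral_twoPointKernel_le (hp : 0 ≤ p) (hq : 1 < q) (h₁ : 0 ≤ s₁) (h₁' : s₁ < 1)
    (h₂ : 0 ≤ s₂) (h₂' : s₂ < 1) :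
    ∫ θ in 0..2 * π, twoPointKernel p q s₁ s₂ θ ≤
      2 * (1 + 2 * π) ^ q / (q - 1) * (1 / ((1 - s₁) ^ p * (1 - s₂) ^ (q - 1))) := by
  have hd₂ : 0 < 1 - s₂ := by linarith
  set K := (1 + 2 * π) ^ q / (1 - s₁) ^ p
  have hcont := continuous_twoPointKernel (p := p) (q := q) h₁ h₁' h₂ h₂'
  have hmajorant : IntervalIntegrable (fun θ ↦ K * (1 - s₂ + θ) ^ (-q)) volume 0 π := by
    refine (continuousOn_const.mul (ContinuousOn.rpow_const (by fun_prop) fun θ hθ ↦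
      Or.inl ?_)).intervalIntegrable
    rw [Set.uIcc_of_le pi_pos.le] at hθ
    linarith [hθ.1]
  calc ∫ θ in 0..2 * π, twoPointKernel p q s₁ s₂ θ
      = 2 * ∫ θ in 0..π, twoPointKernel p q s₁ s₂ θ :=
        intervalIntegral_eq_two_mul_of_symm (fun _ ↦ twoPointKernel_two_pi_sub)
          (hcont.intervalIntegrable _ _)
    _ ≤ 2 * ∫ θ in 0..π, K * (1 - s₂ + θ) ^ (-q) := by
        gcongr
        refine intervalIntegral.integral_mono_on pi_pos.le (hcont.intervalIntegrable _ _)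
          hmajorant fun θ hθ ↦ ?_
        have hθ' : |θ| ≤ π := by rw [abs_of_nonneg hθ.1]; exact hθ.2
        simpa only [abs_of_nonneg hθ.1] using
          twoPointKernel_le hp (by linarith) h₁ h₁' h₂ h₂' hθ'
    _ ≤ 2 * (K * ((1 - s₂) ^ (1 - q) / (q - 1))) := by
        rw [intervalIntegral.integral_const_mul]
        gcongr
        exact integral_add_rpow_neg_le hq hd₂ pi_pos.le
    _ = 2 * (1 + 2 * π) ^ q / (q - 1) * (1 / ((1 - s₁) ^ p * (1 - s₂) ^ (q - 1))) := by
        rw [show 1 - q = -(q - 1) by ring, rpow_neg hd₂.le]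
        simp only [K]
        field_simp

end IntegralTwoPointKernel

theorem stmt12 (p q : ℝ) (hp : 0 < p) (hq : 1 < q) :
    ∃ c C : ℝ, 0 < c ∧ 0 < C ∧ ∀ s₁ s₂ : ℝ, 0 ≤ s₁ → s₁ ≤ s₂ → s₂ < 1 →
      c * (1 / ((1 - s₁) ^ p * (1 - s₂) ^ (q - 1))) ≤
        (∫ θ in (0:ℝ)..(2 * π),
          1 / (‖1 - s₁ * Complex.exp (θ * Complex.I)‖ ^ p *
               ‖1 - s₂ * Complex.exp (θ * Complex.I)‖ ^ q)) ∧
      (∫ θ in (0:ℝ)..(2 * π),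
          1 / (‖1 - s₁ * Complex.exp (θ * Complex.I)‖ ^ p *
               ‖1 - s₂ * Complex.exp (θ * Complex.I)‖ ^ q)) ≤
        C * (1 / ((1 - s₁) ^ p * (1 - s₂) ^ (q - 1))) := by
  refine ⟨1 / (2 ^ p * 2 ^ q), 2 * (1 + 2 * π) ^ q / (q - 1), by positivity,
    div_pos (by positivity) (by linarith), fun s₁ s₂ h₁ h₁₂ h₂ ↦ ⟨?_, ?_⟩⟩
  · exact le_integral_twoPointKernel hp.le (by linarith) h₁ h₁₂ h₂
  · exact integral_twoPointKernel_le hp.le hq h₁ (h₁₂.trans_lt h₂) (h₁.trans h₁₂) h₂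
end

section
/- Let 0 ≤ s₁ ≤ s₂ < 1 and p > 0. Then ∫_0^{2π} dθ / (|1 − s₁e^{iθ}|^p · |1 − s₂e^{iθ}|) ≍ (1/(1−s₁)^p) · (log((1−s₁)/(1−s₂)) + 1), where the comparison constants depend only on p. -/
open Real MeasureTheory intervalIntegral

/-! For `θ ∈ [0, π]` and `s ∈ [0, 1)` one has `‖1 - s e^{iθ}‖ ≍ (1 - s) + θ`, since
`‖1 - s e^{iθ}‖² = (1 - s)² + 4 s sin²(θ/2)` and `θ/π ≤ sin (θ/2) ≤ θ/2`. Using the symmetry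
`θ ↦ 2π - θ`, the integral is therefore comparable to the model integral
`∫₀^π dθ / ((a + θ)^p (b + θ))` with `a = 1 - s₁ ≥ b = 1 - s₂`. On `[0, a]` the first factor is
`≍ a^p` and the second integrates to `log ((b + a) / b) ≍ log (a / b) + 1`; on `[a, π]` the
integrand is at most `θ^(-p-1)`, which contributes at most `a^(-p) / p`. -/

lemma integral_zero_two_mul_eq_two_mul {f : ℝ → ℝ} {a : ℝ}
    (hf : IntervalIntegrable f volume 0 a) (hsymm : ∀ x, f (2 * a - x) = f x) :
    ∫ x in 0..2 * a, f x = 2 * ∫ x in 0..a, f x := by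
  have h2a : 2 * a - a = a := by ring
  have hf' : IntervalIntegrable f volume a (2 * a) := by
    simpa only [hsymm, sub_zero, h2a] using (hf.comp_sub_left (2 * a)).symm
  have hreflect : ∫ x in a..2 * a, f x = ∫ x in 0..a, f x := by
    conv_lhs => enter [1, x]; rw [← hsymm x]
    rw [integral_comp_sub_left, sub_self, h2a]
  rw [← integral_add_adjacent_intervals hf hf', hreflect, two_mul]

lemma norm_one_sub_mul_exp_sq (s θ : ℝ) :
    ‖1 - s * Complex.exp (θ * Complex.I)‖ ^ 2 = (1 - s) ^ 2 + 4 * s * sin (θ / 2) ^ 2 := by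
  have hcos : cos θ = 1 - 2 * sin (θ / 2) ^ 2 := by
    rw [← mul_div_cancel₀ θ (two_ne_zero' ℝ), cos_two_mul, mul_div_cancel₀ θ (two_ne_zero' ℝ)]
    linear_combination 2 * sin_sq_add_cos_sq (θ / 2)
  rw [Complex.sq_norm, Complex.normSq_apply]
  simp only [Complex.sub_re, Complex.one_re, Complex.re_ofReal_mul, Complex.exp_ofReal_mul_I_re,
    Complex.sub_im, Complex.one_im, Complex.im_ofReal_mul, Complex.exp_ofReal_mul_I_im]
  linear_combination s ^ 2 * sin_sq_add_cos_sq θ - 2 * s * hcos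

lemma norm_one_sub_mul_exp_le {s θ : ℝ} (hs : s ≤ 1) (hθ : 0 ≤ θ) :
    ‖1 - s * Complex.exp (θ * Complex.I)‖ ≤ 1 - s + θ := by
  have hsin : 4 * sin (θ / 2) ^ 2 ≤ θ ^ 2 := by
    nlinarith [sin_sq_le_sq (x := θ / 2)]
  rw [← sq_le_sq₀ (norm_nonneg _) (by linarith), norm_one_sub_mul_exp_sq]
  rcases le_total s 0 with hs₀ | hs₀
  · nlinarith [sq_nonneg (sin (θ / 2))]
  · nlinarith [mul_le_mul_of_nonneg_left hsin hs₀]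

lemma one_sub_add_le_nine_mul_norm_one_sub_mul_exp {s θ : ℝ} (hs₀ : 0 ≤ s) (hs₁ : s ≤ 1)
    (hθ₀ : 0 ≤ θ) (hθπ : θ ≤ π) :
    1 - s + θ ≤ 9 * ‖1 - s * Complex.exp (θ * Complex.I)‖ := by
  have hsin : θ / π ≤ sin (θ / 2) := by
    have := mul_le_sin (x := θ / 2) (by linarith) (by linarith)
    rwa [show 2 / π * (θ / 2) = θ / π by field_simp] at this
  have hθsq : θ ^ 2 ≤ 10 * sin (θ / 2) ^ 2 := by
    have hπ : π ^ 2 < 10 := by nlinarith [pi_lt_d2]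
    have := pow_le_pow_left₀ (div_nonneg hθ₀ pi_pos.le) hsin 2
    rw [div_pow, div_le_iff₀ (by positivity)] at this
    nlinarith [sin_sq_le_one (θ / 2)]
  rw [← sq_le_sq₀ (by linarith) (by positivity), mul_pow, norm_one_sub_mul_exp_sq]
  -- For `s ≤ 1/2` the term `1 - s ≥ 1/2` already dominates `θ ≤ π`; otherwise the sine term does.
  rcases le_total s (1 / 2) with hs | hs
  · nlinarith [pi_lt_four]
  · nlinarith [sq_nonneg (1 - s - θ), mul_le_mul_of_nonneg_right hs (sq_nonneg (sin (θ / 2)))]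

noncomputable def modelIntegral (p a b : ℝ) : ℝ := ∫ θ in 0..π, ((a + θ) ^ p * (b + θ))⁻¹

lemma nonneg_of_mem_uIcc {c d x : ℝ} (hc : 0 ≤ c) (hd : 0 ≤ d) (hx : x ∈ Set.uIcc c d) : 0 ≤ x :=
  (le_inf hc hd).trans hx.1

lemma intervalIntegrable_inv_rpow_mul {p a b c d : ℝ} (ha : 0 < a) (hb : 0 < b) (hc : 0 ≤ c)
    (hd : 0 ≤ d) : IntervalIntegrable (fun θ => ((a + θ) ^ p * (b + θ))⁻¹) volume c d := by
  refine ContinuousOn.intervalIntegrable fun x hx => ?_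
  have hx₀ := nonneg_of_mem_uIcc hc hd hx
  have hax : 0 < a + x := by linarith
  have hbx : 0 < b + x := by linarith
  refine ContinuousAt.continuousWithinAt (ContinuousAt.inv₀ ?_ (by positivity))
  exact ((continuousAt_const.add continuousAt_id).rpow_const (Or.inl hax.ne')).mul
    (continuousAt_const.add continuousAt_id)

lemma intervalIntegrable_inv_add {a b : ℝ} (ha : 0 ≤ a) (hb : 0 < b) :
    IntervalIntegrable (fun θ => (b + θ)⁻¹) volume 0 a :=
  intervalIntegrable_inv (fun x hx => by linarith [nonneg_of_mem_uIcc le_rfl ha hx]) (by fun_prop)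

lemma integral_inv_add {a b : ℝ} (ha : 0 ≤ a) (hb : 0 < b) :
    ∫ θ in 0..a, (b + θ)⁻¹ = log ((b + a) / b) := by
  rw [integral_comp_add_left (fun x => x⁻¹), add_zero, integral_inv_of_pos hb (by linarith)]

lemma log_two_div_two_mul_le_log_add_div {a b : ℝ} (hb : 0 < b) (hba : b ≤ a) :
    log 2 / 2 * (log (a / b) + 1) ≤ log ((b + a) / b) := by
  have hratio : 0 ≤ log (a / b) := log_nonneg ((one_le_div hb).mpr hba)
  have h₁ : log (a / b) ≤ log ((b + a) / b) :=
    log_le_log (div_pos (by linarith) hb) (by gcongr; linarith)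
  have h₂ : log 2 ≤ log ((b + a) / b) :=
    log_le_log two_pos (by rw [le_div_iff₀ hb]; linarith)
  nlinarith [mul_nonneg (sub_nonneg.mpr (log_two_lt_d9.le.trans (by norm_num) : log 2 ≤ 1)) hratio]

lemma log_add_div_le {a b : ℝ} (hb : 0 < b) (hba : b ≤ a) :
    log ((b + a) / b) ≤ log (a / b) + 1 := by
  have ha : 0 < a := hb.trans_le hba
  have h : log ((b + a) / b) ≤ log (2 * (a / b)) :=
    log_le_log (by positivity) (by rw [← mul_div_assoc]; gcongr; linarith)
  rw [log_mul two_ne_zero (by positivity)] at h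
  linarith [log_two_lt_d9]

lemma integral_inv_rpow_mul_tail_le {p a b : ℝ} (hp : 0 < p) (ha : 0 < a) (hb : 0 < b)
    (haπ : a ≤ π) : ∫ θ in a..π, ((a + θ) ^ p * (b + θ))⁻¹ ≤ 1 / a ^ p / p := by
  have hpow : ∫ θ in a..π, θ ^ (-(p + 1)) = (a ^ (-p) - π ^ (-p)) / p := by
    rw [integral_rpow (Or.inr ⟨by intro h; linarith, ?_⟩), show -(p + 1) + 1 = -p by ring,
      div_neg, ← neg_div, neg_sub]
    exact fun h => by linarith [(Set.uIcc_of_le haπ ▸ h).1]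
  calc ∫ θ in a..π, ((a + θ) ^ p * (b + θ))⁻¹ ≤ ∫ θ in a..π, θ ^ (-(p + 1)) := by
        refine integral_mono_on haπ (intervalIntegrable_inv_rpow_mul ha hb ha.le pi_pos.le)
          (intervalIntegrable_rpow (Or.inr fun h => ?_)) fun x hx => ?_
        · linarith [(Set.uIcc_of_le haπ ▸ h).1]
        have hx₀ : 0 < x := ha.trans_le hx.1
        rw [rpow_neg hx₀.le, rpow_add_one hx₀.ne']
        gcongr <;> linarith
    _ = (a ^ (-p) - π ^ (-p)) / p := hpow
    _ ≤ 1 / a ^ p / p := by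
        rw [rpow_neg ha.le, one_div]
        gcongr
        linarith [rpow_nonneg pi_pos.le (-p)]

lemma le_modelIntegral {p a b : ℝ} (hp : 0 ≤ p) (hb : 0 < b) (hba : b ≤ a) (haπ : a ≤ π) :
    2 ^ (-p) * (log 2 / 2) * (1 / a ^ p * (log (a / b) + 1)) ≤ modelIntegral p a b := by
  have ha : 0 < a := hb.trans_le hba
  have htail : 0 ≤ ∫ θ in a..π, ((a + θ) ^ p * (b + θ))⁻¹ :=
    integral_nonneg haπ fun x hx => by have := ha.le.trans hx.1; positivity
  have hhead : 1 / (2 * a) ^ p * log ((b + a) / b) ≤ ∫ θ in 0..a, ((a + θ) ^ p * (b + θ))⁻¹ := by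
    rw [← integral_inv_add ha.le hb, ← intervalIntegral.integral_const_mul]
    refine integral_mono_on ha.le ?_ (intervalIntegrable_inv_rpow_mul ha hb le_rfl ha.le)
      fun x hx => ?_
    · exact (intervalIntegrable_inv_add ha.le hb).const_mul _
    · have := hx.1
      rw [mul_inv, one_div]
      gcongr
      linarith [hx.2]
  rw [modelIntegral, ← integral_add_adjacent_intervals
    (intervalIntegrable_inv_rpow_mul ha hb le_rfl ha.le)
    (intervalIntegrable_inv_rpow_mul ha hb ha.le pi_pos.le)]
  calc 2 ^ (-p) * (log 2 / 2) * (1 / a ^ p * (log (a / b) + 1))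
      = 1 / (2 * a) ^ p * (log 2 / 2 * (log (a / b) + 1)) := by
        rw [mul_rpow two_pos.le ha.le, rpow_neg two_pos.le]; ring
    _ ≤ 1 / (2 * a) ^ p * log ((b + a) / b) := by
        gcongr; exact log_two_div_two_mul_le_log_add_div hb hba
    _ ≤ _ := by linarith

lemma modelIntegral_le {p a b : ℝ} (hp : 0 < p) (hb : 0 < b) (hba : b ≤ a) (haπ : a ≤ π) :
    modelIntegral p a b ≤ (1 + 1 / p) * (1 / a ^ p * (log (a / b) + 1)) := by
  have ha : 0 < a := hb.trans_le hba
  have hhead : ∫ θ in 0..a, ((a + θ) ^ p * (b + θ))⁻¹ ≤ 1 / a ^ p * (log (a / b) + 1) := by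
    calc ∫ θ in 0..a, ((a + θ) ^ p * (b + θ))⁻¹ ≤ ∫ θ in 0..a, 1 / a ^ p * (b + θ)⁻¹ := by
          refine integral_mono_on ha.le (intervalIntegrable_inv_rpow_mul ha hb le_rfl ha.le) ?_
            fun x hx => ?_
          · exact (intervalIntegrable_inv_add ha.le hb).const_mul _
          · have := hx.1
            rw [mul_inv, one_div]
            gcongr
            linarith
      _ = 1 / a ^ p * log ((b + a) / b) := by
          rw [intervalIntegral.integral_const_mul, integral_inv_add ha.le hb]
      _ ≤ 1 / a ^ p * (log (a / b) + 1) := by gcongr; exact log_add_div_le hb hba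
  have hratio : 0 ≤ log (a / b) := log_nonneg ((one_le_div hb).mpr hba)
  rw [modelIntegral, ← integral_add_adjacent_intervals
    (intervalIntegrable_inv_rpow_mul ha hb le_rfl ha.le)
    (intervalIntegrable_inv_rpow_mul ha hb ha.le pi_pos.le)]
  calc _ ≤ 1 / a ^ p * (log (a / b) + 1) + 1 / a ^ p / p :=
        add_le_add hhead (integral_inv_rpow_mul_tail_le hp ha hb haπ)
    _ ≤ 1 / a ^ p * (log (a / b) + 1) + 1 / p * (1 / a ^ p * (log (a / b) + 1)) := by
        rw [show 1 / a ^ p / p = 1 / p * (1 / a ^ p * 1) by ring]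
        gcongr
        linarith
    _ = (1 + 1 / p) * (1 / a ^ p * (log (a / b) + 1)) := by ring

lemma one_sub_abs_le_norm_one_sub_mul_exp (s θ : ℝ) :
    1 - |s| ≤ ‖1 - s * Complex.exp (θ * Complex.I)‖ := by
  simpa [Complex.norm_exp_ofReal_mul_I] using
    norm_sub_norm_le (1 : ℂ) (s * Complex.exp (θ * Complex.I))

lemma norm_one_sub_mul_exp_two_pi_sub (s θ : ℝ) :
    ‖1 - s * Complex.exp ((2 * π - θ : ℝ) * Complex.I)‖ =
      ‖1 - s * Complex.exp (θ * Complex.I)‖ := by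
  rw [← sq_eq_sq₀ (norm_nonneg _) (norm_nonneg _), norm_one_sub_mul_exp_sq,
    norm_one_sub_mul_exp_sq, show (2 * π - θ) / 2 = π - θ / 2 by ring, sin_pi_sub]

-- The integrand of the paper's `J(s₁, s₂)` with `q = 1`.
noncomputable def jIntegrand (p s₁ s₂ θ : ℝ) : ℝ :=
  1 / (‖1 - s₁ * Complex.exp (θ * Complex.I)‖ ^ p * ‖1 - s₂ * Complex.exp (θ * Complex.I)‖)

lemma continuous_jIntegrand {p s₁ s₂ : ℝ} (hs₁ : |s₁| < 1) (hs₂ : |s₂| < 1) :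
    Continuous (jIntegrand p s₁ s₂) := by
  have hpos : ∀ s θ : ℝ, |s| < 1 → 0 < ‖1 - s * Complex.exp (θ * Complex.I)‖ := fun s θ hs =>
    (sub_pos.mpr hs).trans_le (one_sub_abs_le_norm_one_sub_mul_exp s θ)
  refine continuous_const.div (Continuous.mul ?_ (by fun_prop)) fun θ => ?_
  · exact (by fun_prop : Continuous _).rpow_const fun θ => Or.inl (hpos s₁ θ hs₁).ne'
  · have := hpos s₁ θ hs₁; have := hpos s₂ θ hs₂; positivity

lemma inv_rpow_mul_le_jIntegrand {p s₁ s₂ θ : ℝ} (hp : 0 ≤ p) (hs₁ : |s₁| < 1) (hs₂ : |s₂| < 1)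
    (hθ : 0 ≤ θ) : ((1 - s₁ + θ) ^ p * (1 - s₂ + θ))⁻¹ ≤ jIntegrand p s₁ s₂ θ := by
  have h₁ := (sub_pos.mpr hs₁).trans_le (one_sub_abs_le_norm_one_sub_mul_exp s₁ θ)
  have h₂ := (sub_pos.mpr hs₂).trans_le (one_sub_abs_le_norm_one_sub_mul_exp s₂ θ)
  have hn₁ := norm_one_sub_mul_exp_le (abs_lt.mp hs₁).2.le hθ
  have hn₂ := norm_one_sub_mul_exp_le (abs_lt.mp hs₂).2.le hθ
  have : 0 ≤ 1 - s₁ + θ := by linarith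
  rw [jIntegrand, one_div]
  gcongr

lemma jIntegrand_le_mul_inv_rpow_mul {p s₁ s₂ θ : ℝ} (hp : 0 ≤ p) (hs₁ : s₁ ∈ Set.Ico 0 1)
    (hs₂ : s₂ ∈ Set.Ico 0 1) (hθ : θ ∈ Set.Icc 0 π) :
    jIntegrand p s₁ s₂ θ ≤ 9 ^ p * 9 * ((1 - s₁ + θ) ^ p * (1 - s₂ + θ))⁻¹ := by
  have hx₁ : 0 < 1 - s₁ + θ := by linarith [hs₁.2, hθ.1]
  have hx₂ : 0 < 1 - s₂ + θ := by linarith [hs₂.2, hθ.1]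
  have hn₁ := one_sub_add_le_nine_mul_norm_one_sub_mul_exp hs₁.1 hs₁.2.le hθ.1 hθ.2
  have hn₂ := one_sub_add_le_nine_mul_norm_one_sub_mul_exp hs₂.1 hs₂.2.le hθ.1 hθ.2
  calc jIntegrand p s₁ s₂ θ ≤ (((1 - s₁ + θ) / 9) ^ p * ((1 - s₂ + θ) / 9))⁻¹ := by
        rw [jIntegrand, one_div]
        gcongr
        · linarith
        · linarith
    _ = 9 ^ p * 9 * ((1 - s₁ + θ) ^ p * (1 - s₂ + θ))⁻¹ := by
        rw [div_rpow hx₁.le (by norm_num)]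
        field_simp

lemma integral_jIntegrand_eq_two_mul {p s₁ s₂ : ℝ} (hs₁ : |s₁| < 1) (hs₂ : |s₂| < 1) :
    ∫ θ in 0..2 * π, jIntegrand p s₁ s₂ θ = 2 * ∫ θ in 0..π, jIntegrand p s₁ s₂ θ :=
  integral_zero_two_mul_eq_two_mul ((continuous_jIntegrand hs₁ hs₂).intervalIntegrable _ _)
    fun θ => by simp only [jIntegrand, norm_one_sub_mul_exp_two_pi_sub]

lemma modelIntegral_le_integral_jIntegrand {p s₁ s₂ : ℝ} (hp : 0 ≤ p) (hs₁ : s₁ ∈ Set.Ico 0 1)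
    (hs₂ : s₂ ∈ Set.Ico 0 1) :
    modelIntegral p (1 - s₁) (1 - s₂) ≤ ∫ θ in 0..π, jIntegrand p s₁ s₂ θ := by
  have habs₁ : |s₁| < 1 := abs_lt.mpr ⟨by linarith [hs₁.1], hs₁.2⟩
  have habs₂ : |s₂| < 1 := abs_lt.mpr ⟨by linarith [hs₂.1], hs₂.2⟩
  exact integral_mono_on pi_pos.le
    (intervalIntegrable_inv_rpow_mul (by linarith [hs₁.2]) (by linarith [hs₂.2]) le_rfl pi_pos.le)
    ((continuous_jIntegrand habs₁ habs₂).intervalIntegrable _ _)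
    fun θ hθ => inv_rpow_mul_le_jIntegrand hp habs₁ habs₂ hθ.1

lemma integral_jIntegrand_le_modelIntegral {p s₁ s₂ : ℝ} (hp : 0 ≤ p) (hs₁ : s₁ ∈ Set.Ico 0 1)
    (hs₂ : s₂ ∈ Set.Ico 0 1) :
    ∫ θ in 0..π, jIntegrand p s₁ s₂ θ ≤ 9 ^ p * 9 * modelIntegral p (1 - s₁) (1 - s₂) := by
  have habs₁ : |s₁| < 1 := abs_lt.mpr ⟨by linarith [hs₁.1], hs₁.2⟩
  have habs₂ : |s₂| < 1 := abs_lt.mpr ⟨by linarith [hs₂.1], hs₂.2⟩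
  rw [modelIntegral, ← intervalIntegral.integral_const_mul]
  exact integral_mono_on pi_pos.le ((continuous_jIntegrand habs₁ habs₂).intervalIntegrable _ _)
    ((intervalIntegrable_inv_rpow_mul (by linarith [hs₁.2]) (by linarith [hs₂.2]) le_rfl
      pi_pos.le).const_mul _)
    fun θ hθ => jIntegrand_le_mul_inv_rpow_mul hp hs₁ hs₂ hθ

theorem stmt13 (p : ℝ) (hp : 0 < p) :
    ∃ c C : ℝ, 0 < c ∧ 0 < C ∧ ∀ s₁ s₂ : ℝ, 0 ≤ s₁ → s₁ ≤ s₂ → s₂ < 1 →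
      c * ((1 / (1 - s₁) ^ p) * (Real.log ((1 - s₁) / (1 - s₂)) + 1)) ≤
        (∫ θ in (0:ℝ)..(2 * π),
          1 / (‖1 - s₁ * Complex.exp (θ * Complex.I)‖ ^ p *
               ‖1 - s₂ * Complex.exp (θ * Complex.I)‖)) ∧
      (∫ θ in (0:ℝ)..(2 * π),
          1 / (‖1 - s₁ * Complex.exp (θ * Complex.I)‖ ^ p *
               ‖1 - s₂ * Complex.exp (θ * Complex.I)‖)) ≤
        C * ((1 / (1 - s₁) ^ p) * (Real.log ((1 - s₁) / (1 - s₂)) + 1)) := by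
  refine ⟨2 ^ (-p) * Real.log 2, 2 * (9 ^ p * 9) * (1 + 1 / p), by positivity, by positivity, ?_⟩
  intro s₁ s₂ hs₁ hs₁₂ hs₂
  have hs₁' : s₁ ∈ Set.Ico 0 1 := ⟨hs₁, hs₁₂.trans_lt hs₂⟩
  have hs₂' : s₂ ∈ Set.Ico 0 1 := ⟨hs₁.trans hs₁₂, hs₂⟩
  have hb : 0 < 1 - s₂ := by linarith
  have hba : 1 - s₂ ≤ 1 - s₁ := by linarith
  have haπ : 1 - s₁ ≤ π := by linarith [pi_gt_three]
  change _ ≤ ∫ θ in 0..2 * π, jIntegrand p s₁ s₂ θ ∧ ∫ θ in 0..2 * π, jIntegrand p s₁ s₂ θ ≤ _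
  rw [integral_jIntegrand_eq_two_mul (abs_lt.mpr ⟨by linarith, hs₁'.2⟩)
    (abs_lt.mpr ⟨by linarith, hs₂⟩)]
  constructor
  · calc 2 ^ (-p) * Real.log 2 * (1 / (1 - s₁) ^ p * (Real.log ((1 - s₁) / (1 - s₂)) + 1))
        = 2 * (2 ^ (-p) * (Real.log 2 / 2) *
            (1 / (1 - s₁) ^ p * (Real.log ((1 - s₁) / (1 - s₂)) + 1))) := by ring
      _ ≤ 2 * modelIntegral p (1 - s₁) (1 - s₂) := by
          gcongr; exact le_modelIntegral hp.le hb hba haπ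
      _ ≤ 2 * ∫ θ in 0..π, jIntegrand p s₁ s₂ θ := by
          gcongr; exact modelIntegral_le_integral_jIntegrand hp.le hs₁' hs₂'
  · calc 2 * ∫ θ in 0..π, jIntegrand p s₁ s₂ θ
        ≤ 2 * (9 ^ p * 9 * modelIntegral p (1 - s₁) (1 - s₂)) := by
          gcongr; exact integral_jIntegrand_le_modelIntegral hp.le hs₁' hs₂'
      _ ≤ 2 * (9 ^ p * 9 * ((1 + 1 / p) *
            (1 / (1 - s₁) ^ p * (Real.log ((1 - s₁) / (1 - s₂)) + 1)))) := by
          gcongr; exact modelIntegral_le hp hb hba haπ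
      _ = _ := by ring
end
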